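/- Let G_1 and G_2 be finite simple graphs, each with at least two vertices, and let G = G_1 ⊗ G_2 be their join. Then γ_r(G) = min{γ(G_1), γ(G_2), 2}. -/
import Mathlib

/-- A set `D` is a dominating set of `G` if every vertex not in `D`
is adjacent to a vertex in `D`. -/
def IsDominatingSet {V : Type*} (G : SimpleGraph V) (D : Finset V) : Prop :=
  ∀ v, v ∉ D → ∃ u ∈ D, G.Adj v u

/-- A set `D` is a restrained dominating set of `G` if every vertex not in `D`
is adjacent to a vertex in `D` and to a vertex outside `D`. -/
def IsRestrainedDominatingSet {V : Type*} (G : SimpleGraph V) (D : Finset V) : Prop :=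
  (∀ v, v ∉ D → ∃ u ∈ D, G.Adj v u) ∧ (∀ v, v ∉ D → ∃ u, u ∉ D ∧ G.Adj v u)

/-- The domination number: minimum cardinality of a dominating set. -/
noncomputable def dominationNumber {V : Type*} [Fintype V] (G : SimpleGraph V) : ℕ :=
  sInf {n | ∃ D : Finset V, IsDominatingSet G D ∧ D.card = n}

/-- The restrained domination number: minimum cardinality of a restrained dominating set. -/
noncomputable def restrainedDominationNumber {V : Type*} [Fintype V] (G : SimpleGraph V) : ℕ :=
  sInf {n | ∃ D : Finset V, IsRestrainedDominatingSet G D ∧ D.card = n}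

/-- The join `G₁ ⊗ G₂` of two graphs: all edges of `G₁` and `G₂`, plus all edges
between the vertex sets of `G₁` and `G₂`. -/
def joinGraph {V₁ V₂ : Type*} (G₁ : SimpleGraph V₁) (G₂ : SimpleGraph V₂) :
    SimpleGraph (V₁ ⊕ V₂) :=
  SimpleGraph.fromRel (fun a b =>
    match a, b with
    | Sum.inl u, Sum.inl v => G₁.Adj u v
    | Sum.inr u, Sum.inr v => G₂.Adj u v
    | Sum.inl _, Sum.inr _ => True
    | _, _ => False)

lemma aux_univ_dom {V : Type*} [Fintype V] (G : SimpleGraph V) :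
    IsDominatingSet G Finset.univ := fun v hv => absurd (Finset.mem_univ v) hv

lemma aux_dom_nonempty {V : Type*} [Fintype V] (G : SimpleGraph V) :
    {n | ∃ D : Finset V, IsDominatingSet G D ∧ D.card = n}.Nonempty :=
  ⟨_, Finset.univ, aux_univ_dom G, rfl⟩

lemma aux_dom_pos {V : Type*} [Fintype V] [Nonempty V] (G : SimpleGraph V) :
    1 ≤ dominationNumber G := by
  obtain ⟨D, hD, hcard⟩ := Nat.sInf_mem (aux_dom_nonempty G)
  have hcard' : D.card = dominationNumber G := hcard
  rcases Nat.eq_zero_or_pos (dominationNumber G) with h0 | h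
  · rw [h0, Finset.card_eq_zero] at hcard'
    subst hcard'
    obtain ⟨v⟩ := ‹Nonempty V›
    obtain ⟨u, hu, -⟩ := hD v (Finset.notMem_empty v)
    exact absurd hu (Finset.notMem_empty u)
  · exact h

/-- If `G₁` and `G₂` each have at least two vertices, then
`γ_r(G₁ ⊗ G₂) = min{γ(G₁), γ(G₂), 2}`. -/
theorem stmt_7 {V₁ V₂ : Type*} [Fintype V₁] [Fintype V₂]
    (G₁ : SimpleGraph V₁) (G₂ : SimpleGraph V₂)
    (h₁ : 2 ≤ Fintype.card V₁) (h₂ : 2 ≤ Fintype.card V₂) :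
    restrainedDominationNumber (joinGraph G₁ G₂) =
      min (min (dominationNumber G₁) (dominationNumber G₂)) 2 := by
  classical
  obtain ⟨a₁, a₁', ha₁⟩ := Fintype.exists_pair_of_one_lt_card (by omega : 1 < Fintype.card V₁)
  obtain ⟨a₂, a₂', ha₂⟩ := Fintype.exists_pair_of_one_lt_card (by omega : 1 < Fintype.card V₂)
  have : Nonempty V₁ := ⟨a₁⟩
  have : Nonempty V₂ := ⟨a₂⟩
  set G := joinGraph G₁ G₂ with hGdef
  -- adjacency facts
  have hadj12 : ∀ (u : V₁) (v : V₂), G.Adj (Sum.inl u) (Sum.inr v) := by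
    intro u v
    rw [hGdef, joinGraph, SimpleGraph.fromRel_adj]
    exact ⟨Sum.inl_ne_inr, Or.inl trivial⟩
  have hadj21 : ∀ (v : V₂) (u : V₁), G.Adj (Sum.inr v) (Sum.inl u) :=
    fun v u => (G.adj_symm (hadj12 u v))
  have hadj11 : ∀ (u v : V₁), G.Adj (Sum.inl u) (Sum.inl v) ↔ G₁.Adj u v := by
    intro u v
    rw [hGdef, joinGraph, SimpleGraph.fromRel_adj]
    constructor
    · rintro ⟨hne, h | h⟩
      · exact h
      · exact h.symm
    · intro h
      exact ⟨by simpa using G₁.ne_of_adj h, Or.inl h⟩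
  have hadj22 : ∀ (u v : V₂), G.Adj (Sum.inr u) (Sum.inr v) ↔ G₂.Adj u v := by
    intro u v
    rw [hGdef, joinGraph, SimpleGraph.fromRel_adj]
    constructor
    · rintro ⟨hne, h | h⟩
      · exact h
      · exact h.symm
    · intro h
      exact ⟨by simpa using G₂.ne_of_adj h, Or.inl h⟩
  have hSr_ne : {n | ∃ D : Finset (V₁ ⊕ V₂), IsRestrainedDominatingSet G D ∧ D.card = n}.Nonempty := by
    refine ⟨_, Finset.univ, ⟨?_, ?_⟩, rfl⟩ <;>
      exact fun v hv => absurd (Finset.mem_univ v) hv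
  have hγ1 : 1 ≤ dominationNumber G₁ := aux_dom_pos G₁
  have hγ2 : 1 ≤ dominationNumber G₂ := aux_dom_pos G₂
  -- the restrained domination number is positive
  have hr_pos : 1 ≤ restrainedDominationNumber G := by
    obtain ⟨D, hD, hcard⟩ := Nat.sInf_mem hSr_ne
    have hcard' : D.card = restrainedDominationNumber G := hcard
    rcases Nat.eq_zero_or_pos (restrainedDominationNumber G) with h0 | h
    · rw [h0, Finset.card_eq_zero] at hcard'
      subst hcard'
      obtain ⟨u, hu, -⟩ := hD.1 (Sum.inl a₁) (Finset.notMem_empty _)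
      exact absurd hu (Finset.notMem_empty u)
    · exact h
  -- restrained domination number ≤ 2
  have hr_le2 : restrainedDominationNumber G ≤ 2 := by
    apply Nat.sInf_le
    refine ⟨{Sum.inl a₁, Sum.inr a₂}, ⟨?_, ?_⟩, ?_⟩
    · rintro (u | w) hv
      · exact ⟨Sum.inr a₂, by simp, hadj12 u a₂⟩
      · exact ⟨Sum.inl a₁, by simp, hadj21 w a₁⟩
    · rintro (u | w) hv
      · have hu : u ≠ a₁ := by rintro rfl; simp at hv
        refine ⟨Sum.inr a₂', by simpa using ha₂.symm, hadj12 u a₂'⟩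
      · refine ⟨Sum.inl a₁', by simpa using ha₁.symm, hadj21 w a₁'⟩
    · rw [Finset.card_insert_of_notMem (by simp), Finset.card_singleton]
  -- if some Gᵢ has a dominating singleton, γ_r = 1
  have hone1 : dominationNumber G₁ = 1 → restrainedDominationNumber G ≤ 1 := by
    intro hd
    obtain ⟨D, hD, hcard'⟩ := Nat.sInf_mem (aux_dom_nonempty G₁)
    have hcard : D.card = dominationNumber G₁ := hcard'
    rw [hd, Finset.card_eq_one] at hcard
    obtain ⟨a, rfl⟩ := hcard
    apply Nat.sInf_le
    refine ⟨{Sum.inl a}, ⟨?_, ?_⟩, Finset.card_singleton _⟩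
    · rintro (u | w) hv
      · have hu : u ∉ ({a} : Finset V₁) := by
          simp only [Finset.mem_singleton] at hv ⊢
          exact fun h => hv (by rw [h])
        obtain ⟨x, hx, hadj⟩ := hD u hu
        rw [Finset.mem_singleton] at hx
        subst hx
        exact ⟨Sum.inl x, Finset.mem_singleton_self _, (hadj11 u x).mpr hadj⟩
      · exact ⟨Sum.inl a, Finset.mem_singleton_self _, hadj21 w a⟩
    · rintro (u | w) hv
      · exact ⟨Sum.inr a₂, by simp, hadj12 u a₂⟩
      · rcases eq_or_ne a₁ a with rfl | hne
        · exact ⟨Sum.inl a₁', by simpa using ha₁.symm, hadj21 w a₁'⟩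
        · exact ⟨Sum.inl a₁, by simpa using hne, hadj21 w a₁⟩
  have hone2 : dominationNumber G₂ = 1 → restrainedDominationNumber G ≤ 1 := by
    intro hd
    obtain ⟨D, hD, hcard'⟩ := Nat.sInf_mem (aux_dom_nonempty G₂)
    have hcard : D.card = dominationNumber G₂ := hcard'
    rw [hd, Finset.card_eq_one] at hcard
    obtain ⟨a, rfl⟩ := hcard
    apply Nat.sInf_le
    refine ⟨{Sum.inr a}, ⟨?_, ?_⟩, Finset.card_singleton _⟩
    · rintro (u | w) hv
      · exact ⟨Sum.inr a, Finset.mem_singleton_self _, hadj12 u a⟩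
      · have hw : w ∉ ({a} : Finset V₂) := by
          simp only [Finset.mem_singleton] at hv ⊢
          exact fun h => hv (by rw [h])
        obtain ⟨x, hx, hadj⟩ := hD w hw
        rw [Finset.mem_singleton] at hx
        subst hx
        exact ⟨Sum.inr x, Finset.mem_singleton_self _, (hadj22 w x).mpr hadj⟩
    · rintro (u | w) hv
      · rcases eq_or_ne a₂ a with rfl | hne
        · exact ⟨Sum.inr a₂', by simpa using ha₂.symm, hadj12 u a₂'⟩
        · exact ⟨Sum.inr a₂, by simpa using hne, hadj12 u a₂⟩
      · exact ⟨Sum.inl a₁, by simp, hadj21 w a₁⟩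
  -- conversely, if γ_r = 1 then one of the γᵢ equals 1
  have hconv : restrainedDominationNumber G = 1 →
      dominationNumber G₁ ≤ 1 ∨ dominationNumber G₂ ≤ 1 := by
    intro hr
    obtain ⟨D, hD, hcard'⟩ := Nat.sInf_mem hSr_ne
    have hcard : D.card = restrainedDominationNumber G := hcard'
    rw [hr, Finset.card_eq_one] at hcard
    obtain ⟨x, rfl⟩ := hcard
    rcases x with a | a
    · left
      apply Nat.sInf_le
      refine ⟨{a}, ?_, Finset.card_singleton _⟩
      intro v hv
      have hv' : Sum.inl v ∉ ({Sum.inl a} : Finset (V₁ ⊕ V₂)) := by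
        simp only [Finset.mem_singleton] at hv ⊢
        exact fun h => hv (by injection h)
      obtain ⟨u, hu, hadj⟩ := hD.1 (Sum.inl v) hv'
      rw [Finset.mem_singleton] at hu
      subst hu
      exact ⟨a, Finset.mem_singleton_self _, (hadj11 v a).mp hadj⟩
    · right
      apply Nat.sInf_le
      refine ⟨{a}, ?_, Finset.card_singleton _⟩
      intro v hv
      have hv' : Sum.inr v ∉ ({Sum.inr a} : Finset (V₁ ⊕ V₂)) := by
        simp only [Finset.mem_singleton] at hv ⊢
        exact fun h => hv (by injection h)
      obtain ⟨u, hu, hadj⟩ := hD.1 (Sum.inr v) hv'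
      rw [Finset.mem_singleton] at hu
      subst hu
      exact ⟨a, Finset.mem_singleton_self _, (hadj22 v a).mp hadj⟩
  omega
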